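/- arXiv:1011.0376 — 2 statements merged into one kernel-verified Lean document; each statement's English description precedes it below -/
import Mathlib

section
/- Let R be a commutative noetherian ring, let S_Artin denote the class of Artinian R-modules, and let S be any Serre class of R-modules. Then the extension class (S, S_Artin), i.e., the class of R-modules M admitting a submodule N ∈ S such that M/N is Artinian, is a Serre class; in particular it is closed under extensions. -/
universe u v

/-- The extension class `(S₁, S₂)`: modules `M` admitting a submodule `N ∈ S₁` with `M/N ∈ S₂`. -/
def ExtensionClass {R : Type u} [CommRing R]
    (S₁ S₂ : ∀ (M : Type v) [AddCommGroup M] [Module R M], Prop)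
    (M : Type v) [AddCommGroup M] [Module R M] : Prop :=
  ∃ N : Submodule R M, S₁ N ∧ S₂ (M ⧸ N)

/-- A Serre class of `R`-modules. -/
structure IsSerreClass (R : Type u) [CommRing R]
    (S : ∀ (M : Type v) [AddCommGroup M] [Module R M], Prop) : Prop where
  isoClosed : ∀ (M N : Type v) [AddCommGroup M] [Module R M] [AddCommGroup N] [Module R N],
      (M ≃ₗ[R] N) → S M → S N
  zeroMem : ∀ (M : Type v) [AddCommGroup M] [Module R M], Subsingleton M → S M
  subClosed : ∀ (M : Type v) [AddCommGroup M] [Module R M] (N : Submodule R M), S M → S N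
  quotClosed : ∀ (M : Type v) [AddCommGroup M] [Module R M] (N : Submodule R M), S M → S (M ⧸ N)
  extClosed : ∀ (L M N : Type v) [AddCommGroup L] [Module R L] [AddCommGroup M] [Module R M]
      [AddCommGroup N] [Module R N] (f : L →ₗ[R] M) (g : M →ₗ[R] N),
      Function.Injective f → Function.Surjective g →
      LinearMap.range f = LinearMap.ker g → S L → S N → S M

/-
The extension class `(S, S_Artin)` is closed under isomorphisms, submodules and quotients for
formal reasons. Closure under extensions reduces to a swap: a module `X` with an Artinian
submodule `Y` and `X ⧸ Y ∈ S` lies in `(S, S_Artin)`. Indeed, an extension of two modules of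
`(S, S_Artin)` has a filtration `A ≤ N ≤ B ≤ M` with `A, B ⧸ N ∈ S` and `N ⧸ A, M ⧸ B` Artinian;
the swap applied to `B ⧸ A` yields `A ≤ C ≤ B` with `C ⧸ A ∈ S` and `B ⧸ C` Artinian, so that
`C ∈ S` and `M ⧸ C` is Artinian.

For the swap, take `Z` maximal with `Z ⊓ Y = ⊥`. Then `Z` embeds into `X ⧸ Y`, so `Z ∈ S`, and
`X ⧸ Z` is an essential extension of the Artinian module `(Y ⊔ Z) ⧸ Z`. Over a noetherian ring an
essential extension `W` of an Artinian module `Y` is Artinian: only finitely many maximal ideals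
`m₁, …, mₖ` occur in the socle of `Y`, the torsion `T` of `W` by `b = m₁ ⊓ ⋯ ⊓ mₖ` lies in `Y`
and is essential in `W`, hence `W` is `b`-power torsion, and Melkersson's criterion applies: a
`b`-power torsion module whose `b`-torsion is Artinian is Artinian.
-/

open Submodule Pointwise

/- A minimal entry `a i₁ n₀` freezes every column `n ≥ n₀` from row `i₁` on; the finitely many
remaining columns stabilise together in `Fin n₀ → α`. -/
theorem exists_forall_ge_eq_of_antitone₂ {α : Type*} [PartialOrder α] [WellFoundedLT α]
    {a : ℕ → ℕ → α} (ha : Antitone a) (ha' : ∀ i, Antitone (a i)) :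
    ∃ i₀, ∀ i ≥ i₀, a i = a i₀ := by
  obtain ⟨_, ⟨⟨i₁, n₀⟩, rfl⟩, hmin⟩ :=
    wellFounded_lt.has_min (Set.range fun p : ℕ × ℕ ↦ a p.1 p.2) (Set.range_nonempty _)
  have hconst : ∀ i ≥ i₁, ∀ n ≥ n₀, a i n = a i₁ n₀ := fun i hi n hn ↦
    ((ha hi n).trans (ha' i₁ hn)).eq_of_not_lt (hmin _ ⟨(i, n), rfl⟩)
  obtain ⟨i₂, hi₂⟩ := WellFoundedLT.antitone_chain_condition (f := fun i (k : Fin n₀) ↦ a i k)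
    fun _ _ hij (k : Fin n₀) ↦ ha hij k
  refine ⟨max i₁ i₂, fun i hi ↦ funext fun n ↦ ?_⟩
  obtain hn | hn := lt_or_ge n n₀
  · exact (congrFun (hi₂ i (le_of_max_le_right hi)) ⟨n, hn⟩).symm.trans
      (congrFun (hi₂ _ (le_max_right _ _)) ⟨n, hn⟩)
  · rw [hconst i (le_of_max_le_left hi) n hn, hconst _ (le_max_left _ _) n hn]

theorem exists_maximal_disjoint {α : Type*} [CompleteLattice α] [IsCompactlyGenerated α] (y : α) :
    ∃ z, Maximal (Disjoint · y) z := by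
  obtain ⟨z, -, hz⟩ := zorn_le_nonempty₀ {z | Disjoint z y} (fun c hc hchain _ _ ↦
    ⟨sSup c, hchain.directedOn.disjoint_sSup_left.mpr hc, fun _ ↦ le_sSup⟩) ⊥ disjoint_bot_left
  exact ⟨z, hz⟩

section Module

variable {R M : Type*} [CommRing R] [AddCommGroup M] [Module R M]

theorem le_of_pow_smul_inf_torsionBy_le {x : R} {N N' : Submodule R M} (hN' : N' ≤ N)
    (htor : ∀ v ∈ N, ∃ n : ℕ, x ^ n • v = 0)
    (h : ∀ n : ℕ, x ^ n • N ⊓ torsionBy R M x ≤ x ^ n • N') : N ≤ N' := by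
  suffices ∀ n : ℕ, ∀ v ∈ N, x ^ n • v = 0 → v ∈ N' from fun v hv ↦
    (htor v hv).elim fun n ↦ this n v hv
  intro n
  induction n with
  | zero =>
    intro v _ hv
    rw [pow_zero, one_smul] at hv
    exact hv ▸ N'.zero_mem
  | succ n ih =>
    intro v hv hvn
    have hxv : x ^ n • v ∈ x ^ n • N ⊓ torsionBy R M x :=
      mem_inf.mpr ⟨smul_mem_pointwise_smul _ _ _ hv,
        by rwa [mem_torsionBy_iff, smul_smul, ← pow_succ']⟩
    obtain ⟨u, hu, hxu⟩ := (mem_smul_pointwise_iff_exists _ _ _).mp (h n hxv)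
    have : v - u ∈ N' := ih _ (sub_mem hv (hN' hu)) (by rw [smul_sub, hxu, sub_self])
    simpa using add_mem this hu

theorem Submodule.pow_succ_smul_le (x : R) (N : Submodule R M) (n : ℕ) :
    x ^ (n + 1) • N ≤ x ^ n • N := by
  rw [pow_succ, mul_smul]
  exact smul_mono_right _ fun _ ⟨v, hv, hxv⟩ ↦ hxv ▸ N.smul_mem x hv

/- Melkersson's criterion for a principal ideal. Inside a larger submodule, `N` is determined by
the family `(xⁿ • N) ⊓ (0 :ₘ x)` of submodules of the Artinian module `0 :ₘ x`, and along a
descending chain these families form a doubly antitone array, which stabilises. -/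
theorem isArtinian_of_isArtinian_torsionBy {x : R} (htor : ∀ v : M, ∃ n : ℕ, x ^ n • v = 0)
    [IsArtinian R (torsionBy R M x)] : IsArtinian R M := by
  refine monotone_stabilizes_iff_artinian.mp fun N ↦ ?_
  set K := torsionBy R M x
  let a : ℕ → ℕ → Submodule R K := fun i n ↦ (x ^ n • OrderDual.ofDual (N i)).comap K.subtype
  obtain ⟨i₀, hi₀⟩ := exists_forall_ge_eq_of_antitone₂ (a := a)
    (fun _ _ hij n ↦ comap_mono (smul_mono_right _ (N.monotone hij)))
    (fun i ↦ antitone_nat_of_succ_le fun n ↦ comap_mono (pow_succ_smul_le x _ n))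
  refine ⟨i₀, fun i hi ↦ le_antisymm (N.monotone hi) ?_⟩
  refine le_of_pow_smul_inf_torsionBy_le (N.monotone hi) (fun v _ ↦ htor v) fun n v hv ↦ ?_
  have : (⟨v, hv.2⟩ : K) ∈ a i₀ n := hv.1
  rwa [← hi₀ i hi] at this

theorem isArtinian_of_isArtinian_torsionBySet (s : Finset R)
    (htor : ∀ x ∈ s, ∀ v : M, ∃ n : ℕ, x ^ n • v = 0)
    (hs : IsArtinian R (torsionBySet R M s)) : IsArtinian R M := by
  classical
  induction s using Finset.induction_on generalizing M with
  | empty =>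
    have : torsionBySet R M (∅ : Finset R) = ⊤ := eq_top_iff.mpr fun v _ ↦
      (mem_torsionBySet_iff _ _).mpr fun ⟨_, h⟩ ↦ absurd h (Finset.notMem_empty _)
    rw [this] at hs
    exact isArtinian_of_linearEquiv topEquiv
  | insert x s _ ih =>
    have hle : torsionBySet R M ↑(insert x s) ≤ torsionBy R M x :=
      torsionBySet_singleton_eq (R := R) (M := M) x ▸
        torsionBySet_le_torsionBySet_of_subset (by simp)
    have hcomap : torsionBySet R (torsionBy R M x) s =
        (torsionBySet R M ↑(insert x s)).comap (torsionBy R M x).subtype := by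
      ext ⟨v, hv⟩
      simp [mem_torsionBySet_iff, (mem_torsionBy_iff _ _).mp hv]
    have : IsArtinian R (torsionBy R M x) := by
      refine ih (fun y hy v ↦ ?_) ?_
      · obtain ⟨n, hn⟩ := htor y (Finset.mem_insert_of_mem hy) v
        exact ⟨n, Subtype.ext hn⟩
      · rw [hcomap]
        exact isArtinian_of_linearEquiv (comapSubtypeEquivOfLe hle).symm
    exact isArtinian_of_isArtinian_torsionBy (htor x (Finset.mem_insert_self x s))

def Submodule.IsEssential (N : Submodule R M) : Prop :=
  ∀ V : Submodule R M, Disjoint V N → V = ⊥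

theorem Submodule.IsEssential.exists_smul_mem_ne_zero {N : Submodule R M} (hN : N.IsEssential)
    {u : M} (hu : u ≠ 0) : ∃ r : R, r • u ∈ N ∧ r • u ≠ 0 := by
  have : ¬ Disjoint (R ∙ u) N := fun h ↦ hu (span_singleton_eq_bot.mp (hN _ h))
  simp only [disjoint_def, not_forall, exists_prop, mem_span_singleton] at this
  obtain ⟨_, ⟨r, rfl⟩, hrN, hr0⟩ := this
  exact ⟨r, hrN, hr0⟩

theorem Submodule.IsEssential.torsionBySet_le {N : Submodule R M} (hN : N.IsEssential)
    (m : Ideal R) [m.IsMaximal] : torsionBySet R M m ≤ N := by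
  intro u hu
  obtain rfl | hu0 := eq_or_ne u 0
  · exact N.zero_mem
  obtain ⟨r, hrN, hr0⟩ := hN.exists_smul_mem_ne_zero hu0
  have hrm : r ∉ m := fun hr ↦ hr0 ((mem_torsionBySet_iff _ _).mp hu ⟨r, hr⟩)
  obtain ⟨s, i, hi, hsi⟩ := Ideal.IsMaximal.exists_inv inferInstance hrm
  have hiu : i • u = 0 := (mem_torsionBySet_iff _ _).mp hu ⟨i, hi⟩
  have : (s * r + i) • u = s • r • u := by rw [add_smul, hiu, add_zero, mul_smul]
  rw [hsi, one_smul] at this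
  exact this ▸ N.smul_mem s hrN

theorem Submodule.IsEssential.exists_pow_smul_eq_zero [IsNoetherianRing R] {T : Submodule R M}
    (hT : T.IsEssential) {x : R} (hx : ∀ t ∈ T, x • t = 0) (v : M) : ∃ n : ℕ, x ^ n • v = 0 := by
  -- `ker xⁿ` and `range xⁿ` are eventually disjoint on the noetherian module `R ∙ v`, while
  -- `x` kills `T`; so `R ∙ xⁿ⁺¹ • v` misses `T`.
  let F := R ∙ v
  let f : Module.End R F := algebraMap R (Module.End R F) x
  have hf : ∀ (n : ℕ) (w : F), ((f ^ n) w : M) = x ^ n • (w : M) := fun n w ↦ by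
    simp [f, ← map_pow]
  obtain ⟨n, hn⟩ := (Module.End.eventually_disjoint_ker_pow_range_pow f).exists_forall_of_atTop
  refine ⟨n + 1, span_singleton_eq_bot.mp (hT _ (disjoint_def.mpr fun y hy hyT ↦ ?_))⟩
  obtain ⟨r, hr⟩ := mem_span_singleton.mp hy
  let z : F := ⟨r • v, F.smul_mem r (mem_span_singleton_self v)⟩
  have hz : ((f ^ (n + 1)) z : M) = y := by rw [hf, ← hr, smul_comm]
  have hker : (f ^ (n + 1)) ((f ^ (n + 1)) z) = 0 := by
    ext
    rw [hf, hz, pow_succ, mul_smul, hx y hyT, smul_zero, ZeroMemClass.coe_zero]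
  rw [← hz, disjoint_def.mp (hn _ n.le_succ) _ hker (LinearMap.mem_range_self _ _),
    ZeroMemClass.coe_zero]

theorem IsArtinian.finite_setOf_isMaximal_torsionBySet_ne_bot [IsArtinian R M] :
    {m : Ideal R | m.IsMaximal ∧ torsionBySet R M m ≠ ⊥}.Finite := by
  classical
  have hindep : iSupIndep fun m : {m : Ideal R // m.IsMaximal} ↦ torsionBySet R M m.1 :=
    iSupIndep_iff_supIndep.mpr fun _ ↦ supIndep_torsionBySet_ideal fun m _ m' _ hne ↦
      m.2.coprime_of_ne m'.2 (Subtype.coe_ne_coe.mpr hne)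
  convert (WellFoundedLT.finite_ne_bot_of_iSupIndep hindep).image Subtype.val
  ext m
  simp [and_comm]

theorem IsArtinian.exists_isMaximal_torsionBySet_ne_bot [IsArtinian R M] [Nontrivial M] :
    ∃ m : Ideal R, m.IsMaximal ∧ torsionBySet R M m ≠ ⊥ := by
  obtain ⟨P, hP⟩ := IsAtomic.exists_atom (Submodule R M)
  have : IsSimpleModule R P := isSimpleModule_iff_isAtom.mpr hP
  refine ⟨Module.annihilator R P, IsSimpleModule.annihilator_isMaximal, ?_⟩
  refine ne_bot_of_le_ne_bot hP.1 fun p hp ↦ (mem_torsionBySet_iff _ _).mpr fun ⟨a, ha⟩ ↦ ?_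
  exact congrArg Subtype.val (Module.mem_annihilator.mp ha ⟨p, hp⟩)

theorem Submodule.disjoint_torsionBySet_iff (N : Submodule R M) (s : Set R) :
    Disjoint N (torsionBySet R M s) ↔ torsionBySet R N s = ⊥ := by
  rw [disjoint_iff_comap_eq_bot]
  congr!
  ext
  simp [mem_torsionBySet_iff, Subtype.ext_iff]

theorem isArtinian_of_isEssential [IsNoetherianRing R] {Y : Submodule R M} [IsArtinian R Y]
    (hY : Y.IsEssential) : IsArtinian R M := by
  classical
  obtain ⟨A, hA⟩ : ∃ A : Finset (Ideal R), ∀ m, m ∈ A ↔ m.IsMaximal ∧ torsionBySet R Y m ≠ ⊥ :=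
    ⟨_, fun _ ↦ IsArtinian.finite_setOf_isMaximal_torsionBySet_ne_bot.mem_toFinset⟩
  obtain ⟨b, hb⟩ : ∃ b : Ideal R, ⨅ m ∈ A, m = b := ⟨_, rfl⟩
  have hTY : torsionBySet R M b ≤ Y := by
    rw [← hb, ← iSup_torsionBySet_ideal_eq_torsionBySet_iInf fun m hm m' hm' hne ↦
      ((hA m).mp hm).1.coprime_of_ne ((hA m').mp hm').1 hne]
    exact iSup₂_le fun m hm ↦ have := ((hA m).mp hm).1; hY.torsionBySet_le m
  have hT : (torsionBySet R M b).IsEssential := by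
    intro V hVT
    by_contra hV
    have : Nontrivial ↥(V ⊓ Y) :=
      nontrivial_iff_ne_bot.mpr fun h ↦ hV (hY V (disjoint_iff.mpr h))
    have : IsArtinian R ↥(V ⊓ Y) := isArtinian_of_le inf_le_right
    obtain ⟨m, hm, hmVY⟩ := IsArtinian.exists_isMaximal_torsionBySet_ne_bot (R := R) (M := ↥(V ⊓ Y))
    rw [ne_eq, ← disjoint_torsionBySet_iff] at hmVY
    have hmA : m ∈ A := (hA m).mpr ⟨hm, by
      rw [ne_eq, ← disjoint_torsionBySet_iff]
      exact fun h ↦ hmVY (h.mono_left inf_le_right)⟩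
    have hmT : torsionBySet R M m ≤ torsionBySet R M b :=
      torsionBySet_le_torsionBySet_of_subset (SetLike.coe_subset_coe.mpr (hb ▸ biInf_le _ hmA))
    exact hmVY ((hVT.mono_left inf_le_left).mono_right hmT)
  obtain ⟨s, hs⟩ := IsNoetherian.noetherian b
  have hsT : torsionBySet R M s = torsionBySet R M b := by
    rw [torsionBySet_eq_torsionBySet_span, Ideal.span, hs]
  refine isArtinian_of_isArtinian_torsionBySet s (fun x hx ↦ hT.exists_pow_smul_eq_zero ?_) ?_
  · exact fun t ht ↦ (mem_torsionBySet_iff _ _).mp (hsT ▸ ht) ⟨x, hx⟩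
  · rw [hsT]
    exact isArtinian_of_le hTY

theorem Submodule.isEssential_map_mkQ_of_maximal_disjoint {Y Z : Submodule R M}
    (hZ : Maximal (Disjoint · Y) Z) : (Y.map Z.mkQ).IsEssential := by
  intro V hV
  have hdisj : Disjoint (V.comap Z.mkQ) Y := by
    refine disjoint_def.mpr fun y hyV hyY ↦ disjoint_def.mp hZ.prop y ?_ hyY
    exact (Quotient.mk_eq_zero Z).mp (disjoint_def.mp hV _ hyV (mem_map_of_mem hyY))
  rw [← map_comap_eq_of_surjective Z.mkQ_surjective V, eq_bot_iff, map_le_iff_le_comap, comap_bot,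
    ker_mkQ]
  exact hZ.2 hdisj (le_comap_mkQ Z V)

noncomputable def Submodule.quotientComapSubtypeEquivMap (N X : Submodule R M) :
    (X ⧸ N.comap X.subtype) ≃ₗ[R] X.map N.mkQ :=
  (quotEquivOfEq _ _ (by rw [LinearMap.ker_comp, ker_mkQ])).trans
    ((N.mkQ ∘ₗ X.subtype).quotKerEquivRange.trans
      (LinearEquiv.ofEq _ _ (by rw [LinearMap.range_comp, range_subtype])))

noncomputable def Submodule.quotientEquivMapMkQMapSubtype (N : Submodule R M) (A : Submodule R N) :
    (N ⧸ A) ≃ₗ[R] N.map (A.map N.subtype).mkQ :=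
  (quotEquivOfEq _ _ (comap_map_eq_of_injective N.injective_subtype A).symm).trans
    (quotientComapSubtypeEquivMap _ N)

noncomputable def Submodule.comapMkQQuotientEquiv (N : Submodule R M) (B : Submodule R (M ⧸ N)) :
    (B.comap N.mkQ ⧸ N.comap (B.comap N.mkQ).subtype) ≃ₗ[R] B :=
  (quotientComapSubtypeEquivMap N _).trans
    (LinearEquiv.ofEq _ _ (map_comap_eq_of_surjective N.mkQ_surjective B))

noncomputable def Submodule.quotientComapMkQEquiv (N : Submodule R M) (B : Submodule R (M ⧸ N)) :
    (M ⧸ B.comap N.mkQ) ≃ₗ[R] (M ⧸ N) ⧸ B :=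
  (quotientQuotientEquivQuotient N _ (le_comap_mkQ N B)).symm.trans
    (quotEquivOfEq _ _ (map_comap_eq_of_surjective N.mkQ_surjective B))

end Module

namespace IsSerreClass

variable {R : Type u} [CommRing R] {S : ∀ (M : Type v) [AddCommGroup M] [Module R M], Prop}
  {M N : Type v} [AddCommGroup M] [Module R M] [AddCommGroup N] [Module R N]

theorem of_injective (hS : IsSerreClass R S) (f : M →ₗ[R] N) (hf : Function.Injective f)
    (hN : S N) : S M :=
  hS.isoClosed _ _ (LinearEquiv.ofInjective f hf).symm (hS.subClosed _ _ hN)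

theorem of_submodule (hS : IsSerreClass R S) (P : Submodule R M) (hP : S P)
    (hMP : S (M ⧸ P)) : S M :=
  hS.extClosed _ _ _ P.subtype P.mkQ P.injective_subtype P.mkQ_surjective
    (by rw [range_subtype, ker_mkQ]) hP hMP

end IsSerreClass

theorem isSerreClass_isArtinian {R : Type u} [CommRing R] :
    IsSerreClass.{u, v} R (IsArtinian R ·) where
  isoClosed _ _ _ _ _ _ e _ := isArtinian_of_linearEquiv e
  zeroMem _ _ _ _ := isArtinian_of_finite
  subClosed _ _ _ _ _ := inferInstance
  quotClosed _ _ _ _ _ := inferInstance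
  extClosed _ _ _ _ _ _ _ _ _ f g _ _ h _ _ := isArtinian_of_range_eq_ker f g h

namespace ExtensionClass

variable {R : Type u} [CommRing R] {S₁ S₂ : ∀ (M : Type v) [AddCommGroup M] [Module R M], Prop}
  {M N : Type v} [AddCommGroup M] [Module R M] [AddCommGroup N] [Module R N]

theorem of_linearEquiv (hM : ExtensionClass S₁ S₂ M) (hS₁ : IsSerreClass R S₁)
    (hS₂ : IsSerreClass R S₂) (e : M ≃ₗ[R] N) : ExtensionClass S₁ S₂ N := by
  obtain ⟨P, hP₁, hP₂⟩ := hM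
  exact ⟨P.map (e : M →ₗ[R] N), hS₁.isoClosed _ _ (e.submoduleMap P) hP₁,
    hS₂.isoClosed _ _ (Quotient.equiv P _ e rfl) hP₂⟩

theorem submodule (hM : ExtensionClass S₁ S₂ M) (hS₁ : IsSerreClass R S₁)
    (hS₂ : IsSerreClass R S₂) (N : Submodule R M) : ExtensionClass S₁ S₂ N := by
  obtain ⟨P, hP₁, hP₂⟩ := hM
  refine ⟨P.comap N.subtype, hS₁.of_injective (N.subtype.restrict fun _ h ↦ h) ?_ hP₁,
    hS₂.isoClosed _ _ (quotientComapSubtypeEquivMap P N).symm (hS₂.subClosed _ _ hP₂)⟩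
  exact fun _ _ h ↦ Subtype.ext (Subtype.ext (congrArg (fun z : P ↦ (z : M)) h))

theorem quotient (hM : ExtensionClass S₁ S₂ M) (hS₁ : IsSerreClass R S₁)
    (hS₂ : IsSerreClass R S₂) (Q : Submodule R M) : ExtensionClass S₁ S₂ (M ⧸ Q) := by
  obtain ⟨P, hP₁, hP₂⟩ := hM
  refine ⟨P.map Q.mkQ, hS₁.isoClosed _ _ (quotientComapSubtypeEquivMap Q P)
    (hS₁.quotClosed _ _ hP₁), hS₂.isoClosed _ _ ?_ (hS₂.quotClosed _ ((Q ⊔ P).map P.mkQ) hP₂)⟩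
  exact (quotientQuotientEquivQuotient P (Q ⊔ P) le_sup_right).trans
    (quotientQuotientEquivQuotientSup Q P).symm

theorem of_mem_left_of_quotient (hS₁ : IsSerreClass R S₁) (hS₂ : IsSerreClass R S₂)
    (N : Submodule R M) (hN : S₁ N) (hMN : ExtensionClass S₁ S₂ (M ⧸ N)) :
    ExtensionClass S₁ S₂ M := by
  obtain ⟨B, hB₁, hB₂⟩ := hMN
  refine ⟨B.comap N.mkQ, hS₁.of_submodule (N.comap (B.comap N.mkQ).subtype) ?_ ?_,
    hS₂.isoClosed _ _ (quotientComapMkQEquiv N B).symm hB₂⟩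
  · exact hS₁.isoClosed _ _ (comapSubtypeEquivOfLe (le_comap_mkQ N B)).symm hN
  · exact hS₁.isoClosed _ _ (comapMkQQuotientEquiv N B).symm hB₁

theorem of_quotient_mem_right (hS₁ : IsSerreClass R S₁) (hS₂ : IsSerreClass R S₂)
    (N : Submodule R M) (hN : ExtensionClass S₁ S₂ N) (hMN : S₂ (M ⧸ N)) :
    ExtensionClass S₁ S₂ M := by
  obtain ⟨A, hA₁, hA₂⟩ := hN
  refine ⟨A.map N.subtype, hS₁.isoClosed _ _ (equivMapOfInjective _ N.injective_subtype A) hA₁,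
    hS₂.of_submodule (N.map (A.map N.subtype).mkQ) ?_ ?_⟩
  · exact hS₂.isoClosed _ _ (quotientEquivMapMkQMapSubtype N A) hA₂
  · exact hS₂.isoClosed _ _ (quotientQuotientEquivQuotient _ N (map_subtype_le N A)).symm hMN

theorem of_mem_right_of_quotient (hS₁ : IsSerreClass R S₁) (hS₂ : IsSerreClass R S₂)
    (hswap : ∀ (M : Type v) [AddCommGroup M] [Module R M] (N : Submodule R M),
      S₂ N → S₁ (M ⧸ N) → ExtensionClass S₁ S₂ M) (N : Submodule R M) (hN : S₂ N)
    (hMN : ExtensionClass S₁ S₂ (M ⧸ N)) : ExtensionClass S₁ S₂ M := by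
  obtain ⟨B, hB₁, hB₂⟩ := hMN
  refine of_quotient_mem_right hS₁ hS₂ (B.comap N.mkQ)
    (hswap _ (N.comap (B.comap N.mkQ).subtype) ?_ ?_) ?_
  · exact hS₂.isoClosed _ _ (comapSubtypeEquivOfLe (le_comap_mkQ N B)).symm hN
  · exact hS₁.isoClosed _ _ (comapMkQQuotientEquiv N B).symm hB₁
  · exact hS₂.isoClosed _ _ (quotientComapMkQEquiv N B).symm hB₂

theorem of_submodule_of_quotient (hS₁ : IsSerreClass R S₁) (hS₂ : IsSerreClass R S₂)
    (hswap : ∀ (M : Type v) [AddCommGroup M] [Module R M] (N : Submodule R M),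
      S₂ N → S₁ (M ⧸ N) → ExtensionClass S₁ S₂ M) (N : Submodule R M) (hN : ExtensionClass S₁ S₂ N)
    (hMN : ExtensionClass S₁ S₂ (M ⧸ N)) : ExtensionClass S₁ S₂ M := by
  obtain ⟨A, hA₁, hA₂⟩ := hN
  refine of_mem_left_of_quotient hS₁ hS₂ (A.map N.subtype)
    (hS₁.isoClosed _ _ (equivMapOfInjective _ N.injective_subtype A) hA₁) ?_
  refine of_mem_right_of_quotient hS₁ hS₂ hswap (N.map (A.map N.subtype).mkQ)
    (hS₂.isoClosed _ _ (quotientEquivMapMkQMapSubtype N A) hA₂) ?_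
  exact hMN.of_linearEquiv hS₁ hS₂ (quotientQuotientEquivQuotient _ N (map_subtype_le N A)).symm

end ExtensionClass

theorem IsSerreClass.extensionClass {R : Type u} [CommRing R]
    {S₁ S₂ : ∀ (M : Type v) [AddCommGroup M] [Module R M], Prop}
    (hS₁ : IsSerreClass R S₁) (hS₂ : IsSerreClass R S₂)
    (hswap : ∀ (M : Type v) [AddCommGroup M] [Module R M] (N : Submodule R M),
      S₂ N → S₁ (M ⧸ N) → ExtensionClass S₁ S₂ M) :
    IsSerreClass R (ExtensionClass S₁ S₂) where
  isoClosed _ _ _ _ _ _ e h := h.of_linearEquiv hS₁ hS₂ e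
  zeroMem _ _ _ _ := ⟨⊥, hS₁.zeroMem _ inferInstance, hS₂.zeroMem _ inferInstance⟩
  subClosed _ _ _ N h := h.submodule hS₁ hS₂ N
  quotClosed _ _ _ N h := h.quotient hS₁ hS₂ N
  extClosed _ _ _ _ _ _ _ _ _ f g hf hg hfg hL hN :=
    .of_submodule_of_quotient hS₁ hS₂ hswap (LinearMap.range f)
      (hL.of_linearEquiv hS₁ hS₂ (LinearEquiv.ofInjective f hf))
      (hN.of_linearEquiv hS₁ hS₂
        ((quotEquivOfEq _ _ hfg).trans (g.quotKerEquivOfSurjective hg)).symm)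

theorem extensionClass_of_isArtinian_of_mem_quotient {R : Type u} [CommRing R] [IsNoetherianRing R]
    {S : ∀ (M : Type v) [AddCommGroup M] [Module R M], Prop} (hS : IsSerreClass R S)
    {X : Type v} [AddCommGroup X] [Module R X] (Y : Submodule R X) [IsArtinian R Y]
    (hXY : S (X ⧸ Y)) : ExtensionClass S (IsArtinian R ·) X := by
  obtain ⟨Z, hZ⟩ := exists_maximal_disjoint Y
  refine ⟨Z, hS.of_injective (Y.mkQ ∘ₗ Z.subtype) ?_ hXY, ?_⟩
  · rw [← LinearMap.ker_eq_bot, LinearMap.ker_comp, ker_mkQ, ← disjoint_iff_comap_eq_bot]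
    exact hZ.prop
  · have : IsArtinian R (Y.map Z.mkQ) :=
      isArtinian_of_surjective _ _ (Z.mkQ.submoduleMap_surjective Y)
    exact isArtinian_of_isEssential (isEssential_map_mkQ_of_maximal_disjoint hZ)

/-- For any Serre class `S`, the extension class `(S, S_Artin)` — the class of modules `M`
admitting a submodule `N ∈ S` with `M/N` Artinian — is a Serre class. -/
theorem extensionClass_artinian_isSerreClass
    {R : Type u} [CommRing R] [IsNoetherianRing R]
    (S : ∀ (M : Type v) [AddCommGroup M] [Module R M], Prop)
    (hS : IsSerreClass R S) :
    IsSerreClass R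
      (ExtensionClass S (fun (M : Type v) [AddCommGroup M] [Module R M] => IsArtinian R M)) :=
  hS.extensionClass isSerreClass_isArtinian fun _ _ _ Y _ hXY ↦
    extensionClass_of_isArtinian_of_mem_quotient hS Y hXY
end

section
/- Let R be a commutative noetherian ring, I an ideal of R, and S₁, S₂ Serre classes of R-modules. Suppose that the extension class (S₁, S₂) is a Serre class and that the extension class (S₂, S₁) satisfies condition (C_I). Then (S₁, S₂) satisfies condition (C_I): for every R-module M such that every element of M is annihilated by some power of I and such that the submodule (0 :_M I) = {x ∈ M | I·x = 0} belongs to (S₁, S₂), the module M belongs to (S₁, S₂). -/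
universe u v

/-- A class `X` of `R`-modules satisfies condition `(C_I)`: whenever every element of `M` is
annihilated by some power of `I` and the submodule `(0 :_M I)` belongs to `X`,
then `M` belongs to `X`. -/
def SatisfiesCondC {R : Type u} [CommRing R] (I : Ideal R)
    (X : ∀ (M : Type v) [AddCommGroup M] [Module R M], Prop) : Prop :=
  ∀ (M : Type v) [AddCommGroup M] [Module R M],
    (∀ x : M, ∃ n : ℕ, ∀ r ∈ I ^ n, r • x = 0) →
    ∀ K : Submodule R M, (∀ x : M, x ∈ K ↔ ∀ r ∈ I, r • x = 0) →
    X K → X M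

/-!
Write `(0 :_M I) ⊇ N` with `N ∈ S₁` and `(0 :_M I) / N ∈ S₂`, and put `Q = M / N`. Then
`(0 :_Q I) = (N :_M I) / N` contains `(0 :_M I) / N ∈ S₂`, with cokernel `(N :_M I) / (0 :_M I)`;
the generators `r₁, …, rₜ` of `I` embed the latter into `Nᵗ ∈ S₁` by `x ↦ (rᵢ x)ᵢ`. Hence
`(0 :_Q I) ∈ (S₂, S₁)`, and condition `(C_I)` for `(S₂, S₁)` gives `P ⊆ Q` with `P ∈ S₂` and
`Q / P ∈ S₁`. The preimage `T` of `P` in `M` lies in `(S₁, S₂)` and `M / T ≅ Q / P ∈ S₁`, so `M` is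
an extension of two modules of the Serre class `(S₁, S₂)`.
-/

open Submodule

theorem mem_torsionBySet_iff' {R A : Type*} [CommSemiring R] [AddCommMonoid A] [Module R A]
    {s : Set R} (x : A) : x ∈ torsionBySet R A s ↔ ∀ r ∈ s, r • x = 0 := by
  simp [mem_torsionBySet_iff]

theorem torsionBySet_le_comap {R A B : Type*} [CommSemiring R] [AddCommMonoid A] [Module R A]
    [AddCommMonoid B] [Module R B] (f : A →ₗ[R] B) (s : Set R) :
    torsionBySet R A s ≤ (torsionBySet R B s).comap f := fun x hx => by
  simp only [mem_comap, mem_torsionBySet_iff'] at hx ⊢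
  exact fun r hr => by rw [← map_smul, hx r hr, map_zero]

section SerreClass

variable {R : Type u} [CommRing R] {S S₁ S₂ : ∀ (M : Type v) [AddCommGroup M] [Module R M], Prop}
  {A B C : Type v} [AddCommGroup A] [Module R A] [AddCommGroup B] [Module R B]
  [AddCommGroup C] [Module R C]

theorem IsSerreClass.of_surjective (hS : IsSerreClass R S) (f : A →ₗ[R] B)
    (hf : Function.Surjective f) (hA : S A) : S B :=
  hS.isoClosed _ _ (f.quotKerEquivOfSurjective hf) (hS.quotClosed _ _ hA)

/-- `C` is a quotient of `A ⧸ ker f`, which embeds into `B`. -/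
theorem IsSerreClass.of_ker_le (hS : IsSerreClass R S) (f : A →ₗ[R] B) (g : A →ₗ[R] C)
    (hg : Function.Surjective g) (hfg : LinearMap.ker f ≤ LinearMap.ker g) (hB : S B) : S C :=
  hS.of_surjective ((LinearMap.ker f).liftQ g hfg)
    (Function.Surjective.of_comp (g := (LinearMap.ker f).mkQ) hg)
    (hS.isoClosed _ _ f.quotKerEquivRange.symm (hS.subClosed _ _ hB))

theorem IsSerreClass.prod (hS : IsSerreClass R S) (hA : S A) (hB : S B) : S (A × B) :=
  hS.extClosed _ _ _ (LinearMap.inl R A B) (LinearMap.snd R A B) LinearMap.inl_injective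
    LinearMap.snd_surjective (LinearMap.range_inl R A B) hA hB

theorem IsSerreClass.pi_fin (hS : IsSerreClass R S) (hA : S A) : ∀ t : ℕ, S (Fin t → A)
  | 0 => hS.zeroMem _ inferInstance
  | t + 1 => hS.isoClosed _ _ (Fin.consLinearEquiv R fun _ => A) (hS.prod hA (hS.pi_fin hA t))

theorem IsSerreClass.quotient_torsionBySet_of_smul_mem (hS : IsSerreClass R S) {I : Ideal R}
    (hI : I.FG) (N : Submodule R A) (hN : S N) (hIN : ∀ r ∈ I, ∀ x : A, r • x ∈ N) :
    S (A ⧸ torsionBySet R A I) := by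
  obtain ⟨t, r, rfl⟩ := fg_iff_exists_fin_generating_family.1 hI
  have hr : ∀ i, r i ∈ span R (Set.range r) := fun i => subset_span ⟨i, rfl⟩
  let φ : A →ₗ[R] Fin t → N :=
    LinearMap.pi fun i => (r i • LinearMap.id).codRestrict N fun x => hIN _ (hr i) x
  have hker : LinearMap.ker φ = torsionBySet R A (span R (Set.range r)) := by
    rw [← torsionBySet_eq_torsionBySet_span]
    ext x
    simp [φ, funext_iff, Subtype.ext_iff]
  exact hS.of_ker_le φ (mkQ _) (mkQ_surjective _) (by rw [hker, ker_mkQ]) (hS.pi_fin hN t)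

theorem ExtensionClass.of_left (h₁ : IsSerreClass R S₁) (h₂ : IsSerreClass R S₂) (hA : S₁ A) :
    ExtensionClass S₁ S₂ A :=
  ⟨⊤, h₁.isoClosed _ _ topEquiv.symm hA, h₂.zeroMem _ (Submodule.Quotient.subsingleton_iff.2 rfl)⟩

theorem ExtensionClass.of_le (h₁ : IsSerreClass R S₁) {P L : Submodule R A} (hPL : P ≤ L)
    (hP : S₁ P) (hLP : S₂ (L ⧸ P.comap L.subtype)) : ExtensionClass S₁ S₂ L :=
  ⟨_, h₁.isoClosed _ _ (comapSubtypeEquivOfLe hPL).symm hP, hLP⟩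

theorem ExtensionClass.of_quotient (h₁ : IsSerreClass R S₁) (h₂ : IsSerreClass R S₂)
    (hSerre : IsSerreClass R (ExtensionClass S₁ S₂)) (N : Submodule R A) (hN : S₁ N)
    (hQ : ExtensionClass S₂ S₁ (A ⧸ N)) : ExtensionClass S₁ S₂ A := by
  obtain ⟨P, hP, hQP⟩ := hQ
  set T := P.comap N.mkQ
  have hNT : N ≤ T := fun x hx => by simp [T, (Quotient.mk_eq_zero N).2 hx]
  have hT : ExtensionClass S₁ S₂ T :=
    of_le h₁ hNT hN <| h₂.of_ker_le
      ((N.mkQ ∘ₗ T.subtype).codRestrict P fun x => mem_comap.1 x.2) (mkQ _) (mkQ_surjective _)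
      (by rw [LinearMap.ker_codRestrict, LinearMap.ker_comp, ker_mkQ, ker_mkQ]) hP
  have hAT : S₁ (A ⧸ T) :=
    h₁.of_ker_le (P.mkQ ∘ₗ N.mkQ) T.mkQ T.mkQ_surjective
      (by rw [LinearMap.ker_comp, ker_mkQ, ker_mkQ]) hQP
  exact hSerre.extClosed _ _ _ T.subtype T.mkQ T.injective_subtype T.mkQ_surjective
    (by rw [range_subtype, ker_mkQ]) hT (of_left h₁ h₂ hAT)

theorem ExtensionClass.torsionBySet_quotient (h₁ : IsSerreClass R S₁) (h₂ : IsSerreClass R S₂)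
    {I : Ideal R} (hI : I.FG) (N : Submodule R A) (hN : S₁ N) (hNK : N ≤ torsionBySet R A I)
    (hKN : S₂ (torsionBySet R A I ⧸ N.comap (torsionBySet R A I).subtype)) :
    ExtensionClass S₂ S₁ (torsionBySet R (A ⧸ N) I) := by
  set K := torsionBySet R A I
  set K₂ := torsionBySet R (A ⧸ N) I
  set L := K₂.comap N.mkQ
  have hKL : K ≤ L := torsionBySet_le_comap N.mkQ I
  have hNK₂ : S₂ (K.map N.mkQ) :=
    h₂.of_ker_le (mkQ _) (N.mkQ.submoduleMap K) (LinearMap.submoduleMap_surjective _ _)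
      (fun x hx => by
        rw [ker_mkQ] at hx
        ext
        simpa using (Quotient.mk_eq_zero N).2 hx) hKN
  have hLK : S₁ (L ⧸ torsionBySet R L I) :=
    h₁.quotient_torsionBySet_of_smul_mem hI (N.comap L.subtype)
      (h₁.isoClosed _ _ (comapSubtypeEquivOfLe (hNK.trans hKL)).symm hN)
      fun r hr x => by
        have hx := (mem_torsionBySet_iff' _).1 (mem_comap.1 x.2) r hr
        rw [← map_smul] at hx
        exact (Quotient.mk_eq_zero N).1 hx
  refine of_le h₂ (map_le_iff_le_comap.2 hKL) hNK₂ <|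
    h₁.of_ker_le (mkQ _) (mkQ _ ∘ₗ (N.mkQ ∘ₗ L.subtype).codRestrict K₂ fun x => x.2)
      ((mkQ_surjective _).comp fun y => ?_) (fun x hx => ?_) hLK
  · obtain ⟨x, hx⟩ := N.mkQ_surjective y
    exact ⟨⟨x, mem_comap.2 (hx ▸ y.2)⟩, Subtype.ext hx⟩
  · have hxK : (x : A) ∈ K := torsionBySet_le_comap L.subtype I (by rwa [ker_mkQ] at hx)
    rw [LinearMap.mem_ker, LinearMap.comp_apply, mkQ_apply, Quotient.mk_eq_zero]
    exact mem_map_of_mem hxK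

end SerreClass

/-- If the extension class `(S₁, S₂)` is a Serre class and `(S₂, S₁)` satisfies condition
`(C_I)`, then `(S₁, S₂)` satisfies condition `(C_I)`. -/
theorem extensionClass_satisfiesCondC
    {R : Type u} [CommRing R] [IsNoetherianRing R] (I : Ideal R)
    (S₁ S₂ : ∀ (M : Type v) [AddCommGroup M] [Module R M], Prop)
    (h₁ : IsSerreClass R S₁) (h₂ : IsSerreClass R S₂)
    (hSerre : IsSerreClass R (ExtensionClass S₁ S₂))
    (hC : SatisfiesCondC I (ExtensionClass S₂ S₁)) :
    SatisfiesCondC I (ExtensionClass S₁ S₂) := by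
  intro M _ _ hM K hK ⟨N, hN, hKN⟩
  have hN₀ : S₁ (N.map K.subtype) :=
    h₁.isoClosed _ _ (equivMapOfInjective _ K.injective_subtype N) hN
  rw [← comap_map_eq_of_injective K.injective_subtype N] at hKN
  obtain rfl : K = torsionBySet R M I :=
    Submodule.ext fun x => (hK x).trans (mem_torsionBySet_iff' x).symm
  have hQ : ∀ y : M ⧸ N.map (torsionBySet R M I).subtype, ∃ n : ℕ, ∀ r ∈ I ^ n, r • y = 0 := by
    refine (mkQ_surjective _).forall.2 fun x => (hM x).imp fun n hn r hr => ?_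
    rw [← map_smul, hn r hr, map_zero]
  refine ExtensionClass.of_quotient h₁ h₂ hSerre _ hN₀ <| hC _ hQ _ mem_torsionBySet_iff' ?_
  exact ExtensionClass.torsionBySet_quotient h₁ h₂ (IsNoetherian.noetherian I) _ hN₀
    (map_subtype_le _ _) hKN
end
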